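/- Let D = {1, 3, 4, 5, 9} ⊆ ℤ/11ℤ (the set of nonzero quadratic residues modulo 11). In the group algebra 𝔽₂[D₂₂] of the dihedral group of order 22, let u = 1 + Σ_{j∈D} (sr j). Then u² = 0 and the minimum distance of the code generated by u equals 6. -/

import Mathlib

noncomputable section

open MonoidAlgebra

/-- The code generated by `u` in a group algebra: the `R`-span of `{g • u : g ∈ G}`. -/
def codeGen {R : Type*} [CommSemiring R] {G : Type*} [Monoid G]
    (u : MonoidAlgebra R G) : Submodule R (MonoidAlgebra R G) :=
  Submodule.span R (Set.range fun g : G => MonoidAlgebra.of R G g * u)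

/-- The weight (support size) of an element of a group algebra. -/
def wt {R : Type*} [Semiring R] {G : Type*} (x : MonoidAlgebra R G) : ℕ :=
  x.coeff.support.card

/-- The minimum distance of the code generated by `u`: the least weight of a nonzero
element of the code. -/
def minDist {R : Type*} [CommSemiring R] {G : Type*} [Monoid G]
    (u : MonoidAlgebra R G) : ℕ :=
  sInf {n | ∃ x ∈ codeGen u, x ≠ 0 ∧ wt x = n}

/-- The set of nonzero quadratic residues modulo 11. -/
def D : Finset (ZMod 11) := {1,3,4,5,9}

/-- `u = 1 + ∑_{j ∈ D} sr j` in the group algebra of the dihedral group of order 22. -/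
def uu : MonoidAlgebra (ZMod 2) (DihedralGroup 11) :=
  1 + ∑ j ∈ D, MonoidAlgebra.of (ZMod 2) (DihedralGroup 11) (DihedralGroup.sr j)

/-!
Write `t = ∑_{j ∈ D} sr j`, so `u = 1 + t`. Since `sr j * sr k = r (k - j)`, the square `t * t`
counts the differences of `D`; `D` is an `(11, 5, 2)` difference set, so
`t * t = 5 + 2 ∑_{m ≠ 0} r m = 1` over `𝔽₂`. Hence `t * u = u`, which gives
`u ^ 2 = u + t * u = 0` and `sr i * u = (sr i * t) * u` with `sr i * t` a sum of rotations.
The code is therefore `{(∑ c i r i) * u}`, whose word for `c` has the coefficients `c k` at `r k`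
and `∑_{j ∈ D} c (j - k)` at `sr k`; its minimum weight `6` is checked over all `2 ^ 11`
vectors `c`.
-/

open MonoidAlgebra DihedralGroup Finset

namespace DihedralGroup

variable {n : ℕ}

theorem wt_eq_card_add_card {R : Type*} [Semiring R] [DecidableEq R] [NeZero n]
    (x : MonoidAlgebra R (DihedralGroup n)) :
    wt x = #{k | x.coeff (r k) ≠ 0} + #{k | x.coeff (sr k) ≠ 0} := by
  have hsupp : x.coeff.support = ({g | x.coeff g ≠ 0} : Finset _) := by ext; simp
  rw [wt, hsupp, card_filter, ← equivSum.symm.sum_comp, Fintype.sum_sum_type, card_filter,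
    card_filter]
  rfl

variable {R : Type*} [CommSemiring R] (S : Finset (ZMod n))

variable (R) in
def reflSum : MonoidAlgebra R (DihedralGroup n) :=
  ∑ j ∈ S, of R _ (sr j)

theorem reflSum_mul_self_eq_one [NeZero n] [CharP R 2]
    (hS : ∀ t, Odd #{p ∈ S ×ˢ S | p.2 - p.1 = t} ↔ t = 0) :
    reflSum R S * reflSum R S = 1 :=
  calc reflSum R S * reflSum R S
      = ∑ p ∈ S ×ˢ S, of R _ (r (p.2 - p.1)) := by
        simp only [reflSum, sum_mul_sum, ← map_mul, sr_mul_sr, sum_product]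
    _ = ∑ t, (#{p ∈ S ×ˢ S | p.2 - p.1 = t} : R) • of R _ (r t) := by
        simp only [← sum_fiberwise' (S ×ˢ S) (fun p => p.2 - p.1) (fun t => of R _ (r t)),
          sum_const, Nat.cast_smul_eq_nsmul]
    _ = 1 := by
        simp only [CharTwo.natCast_eq_ite, Nat.not_odd_iff_even.symm, hS, ite_not, ite_smul,
          one_smul, zero_smul, sum_ite_eq', mem_univ, if_true, r_zero, map_one]

theorem mul_oneAdd_reflSum_of_mul_self_eq_one (ht : reflSum R S * reflSum R S = 1) :
    reflSum R S * (1 + reflSum R S) = 1 + reflSum R S := by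
  rw [mul_add, mul_one, ht, add_comm]

theorem oneAdd_reflSum_sq [CharP R 2] (ht : reflSum R S * reflSum R S = 1) :
    (1 + reflSum R S) ^ 2 = 0 := by
  rw [sq, add_mul, one_mul, mul_oneAdd_reflSum_of_mul_self_eq_one S ht, ← two_smul R,
    CharTwo.two_eq_zero, zero_smul]

theorem codeGen_oneAdd_reflSum (ht : reflSum R S * reflSum R S = 1) :
    codeGen (1 + reflSum R S) =
      (Submodule.span R (Set.range fun i => of R _ (r i))).map
        (LinearMap.mulRight R (1 + reflSum R S)) := by
  apply le_antisymm
  · rw [codeGen, Submodule.span_le]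
    rintro _ ⟨g | i, rfl⟩
    · exact Submodule.mem_map_of_mem (Submodule.subset_span ⟨g, rfl⟩)
    · refine ⟨of R _ (sr i) * reflSum R S, ?_, ?_⟩
      · simp only [reflSum, mul_sum, ← map_mul, sr_mul_sr]
        exact Submodule.sum_mem _ fun j _ => Submodule.subset_span ⟨j - i, rfl⟩
      · rw [LinearMap.mulRight_apply, mul_assoc, mul_oneAdd_reflSum_of_mul_self_eq_one S ht]
  · rw [Submodule.map_le_iff_le_comap, Submodule.span_le]
    rintro _ ⟨i, rfl⟩
    exact Submodule.subset_span ⟨r i, rfl⟩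

theorem mem_codeGen_oneAdd_reflSum_iff [NeZero n] (ht : reflSum R S * reflSum R S = 1)
    {x : MonoidAlgebra R (DihedralGroup n)} :
    x ∈ codeGen (1 + reflSum R S) ↔
      ∃ c : ZMod n → R, (∑ i, c i • of R _ (r i)) * (1 + reflSum R S) = x := by
  simp only [codeGen_oneAdd_reflSum S ht, Submodule.mem_map,
    Submodule.mem_span_range_iff_exists_fun, LinearMap.mulRight_apply]
  exact ⟨fun ⟨_, ⟨c, hc⟩, hx⟩ => ⟨c, hc ▸ hx⟩, fun ⟨c, hc⟩ => ⟨_, ⟨c, rfl⟩, hc⟩⟩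

theorem coeff_sum_smul_mul_oneAdd_reflSum_r [NeZero n] (c : ZMod n → R) (k : ZMod n) :
    ((∑ i, c i • of R _ (r i)) * (1 + reflSum R S)).coeff (r k) = c k := by
  simp [reflSum, mul_add, sum_mul, mul_sum, coeff_sum, Finsupp.single_apply]

theorem coeff_sum_smul_mul_oneAdd_reflSum_sr [NeZero n] (c : ZMod n → R) (k : ZMod n) :
    ((∑ i, c i • of R _ (r i)) * (1 + reflSum R S)).coeff (sr k) = ∑ j ∈ S, c (j - k) := by
  have hsub (j i : ZMod n) : j - i = k ↔ i = j - k := by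
    rw [sub_eq_iff_eq_add', eq_sub_iff_add_eq, eq_comm]
  simp [reflSum, mul_add, sum_mul, mul_sum, coeff_sum, Finsupp.single_apply, hsub]

variable [DecidableEq R]

/-- The weight of the codeword `(∑ i, c i • r i) * (1 + reflSum R S)`. -/
def doubleCirculantWeight [NeZero n] (c : ZMod n → R) : ℕ :=
  #{k | c k ≠ 0} + #{k | ∑ j ∈ S, c (j - k) ≠ 0}

theorem minDist_oneAdd_reflSum [NeZero n] (ht : reflSum R S * reflSum R S = 1) :
    minDist (1 + reflSum R S) =
      sInf {w | ∃ c : ZMod n → R, c ≠ 0 ∧ doubleCirculantWeight S c = w} := by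
  have hwt (c : ZMod n → R) :
      wt ((∑ i, c i • of R _ (r i)) * (1 + reflSum R S)) = doubleCirculantWeight S c := by
    simp only [wt_eq_card_add_card, coeff_sum_smul_mul_oneAdd_reflSum_r,
      coeff_sum_smul_mul_oneAdd_reflSum_sr, doubleCirculantWeight]
  have hne {c : ZMod n → R} (hc : c ≠ 0) : (∑ i, c i • of R _ (r i)) * (1 + reflSum R S) ≠ 0 :=
    fun h => hc <| funext fun k => by
      rw [← coeff_sum_smul_mul_oneAdd_reflSum_r S c k, h, coeff_zero, Finsupp.zero_apply,
        Pi.zero_apply]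
  rw [minDist]
  congr
  ext w
  simp only [mem_codeGen_oneAdd_reflSum_iff S ht]
  constructor
  · rintro ⟨_, ⟨c, rfl⟩, hx0, rfl⟩
    exact ⟨c, fun hc => hx0 (by simp [hc]), (hwt c).symm⟩
  · rintro ⟨c, hc, rfl⟩
    exact ⟨_, ⟨c, rfl⟩, hne hc, hwt c⟩

end DihedralGroup

theorem six_le_doubleCirculantWeight_D (c : ZMod 11 → ZMod 2) (hc : c ≠ 0) :
    6 ≤ doubleCirculantWeight D c := by
  revert c
  decide +kernel

theorem dihedral_selfdual_code_11 : uu ^ 2 = 0 ∧ minDist uu = 6 := by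
  have ht : reflSum (ZMod 2) D * reflSum (ZMod 2) D = 1 :=
    reflSum_mul_self_eq_one D (by decide)
  refine ⟨oneAdd_reflSum_sq D ht, ?_⟩
  rw [show uu = 1 + reflSum (ZMod 2) D from rfl, minDist_oneAdd_reflSum D ht]
  exact IsLeast.csInf_eq ⟨⟨Pi.single 0 1, by decide, by decide⟩,
    by rintro _ ⟨c, hc, rfl⟩; exact six_le_doubleCirculantWeight_D c hc⟩

end
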